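/- Let K and G be 𝓛(Λ)-valued reproducing kernels on X given by feature maps Φ: X → 𝓛(Λ, W) and Φ': X → 𝓛(Λ, W') via K(x,y) = Φ(y)*Φ(x) and G(x,y) = Φ'(y)*Φ'(x), and assume the closed spans of {Φ(x)ξ} and {Φ'(x)ξ} equal W and W' respectively. Then H_K ⪯ H_G if and only if there exists a bounded linear operator T: W' → W with TΦ'(x) = Φ(x) for all x ∈ X and with T*: W → W' isometric. In this case, G ≠ K if and only if T is not injective. -/

import Mathlib

open MeasureTheory ContinuousLinearMap
open scoped ComplexOrder

noncomputable section

local notation "⟪" x ", " y "⟫" => @inner ℂ _ _ x y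

section Defs

variable {X : Type*} {Λ : Type*} [NormedAddCommGroup Λ] [InnerProductSpace ℂ Λ]

/-- Data exhibiting a Hilbert space `H`, embedded in the `Λ`-valued functions on `X` by `J`,
as the reproducing kernel Hilbert space of the operator-valued kernel `K`;
`kf x ξ` is the element representing `K(x,·)ξ`. -/
structure IsVRKHS (K : X → X → Λ →L[ℂ] Λ) (H : Type*) [NormedAddCommGroup H]
    [InnerProductSpace ℂ H] (J : H →ₗ[ℂ] (X → Λ)) (kf : X → Λ → H) : Prop where
  inj : Function.Injective J
  kfun_eq : ∀ (x : X) (ξ : Λ), J (kf x ξ) = fun y => K x y ξ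
  repro : ∀ (f : H) (x : X) (ξ : Λ), ⟪kf x ξ, f⟫ = ⟪ξ, J f x⟫

/-- Data exhibiting `H` as the RKHS of a scalar-valued kernel `k` on `Y`. -/
structure IsSRKHS {Y : Type*} (k : Y → Y → ℂ) (H : Type*) [NormedAddCommGroup H]
    [InnerProductSpace ℂ H] (J : H →ₗ[ℂ] (Y → ℂ)) (kf : Y → H) : Prop where
  inj : Function.Injective J
  kfun_eq : ∀ y : Y, J (kf y) = fun z => k y z
  repro : ∀ (f : H) (y : Y), ⟪kf y, f⟫ = J f y

/-- `H₁ ⪯ H₂` : every element of `H₁` is an element of `H₂` (as functions) with the same norm. -/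
def RKHSle {H₁ H₂ V : Type*} [NormedAddCommGroup H₁] [InnerProductSpace ℂ H₁]
    [NormedAddCommGroup H₂] [InnerProductSpace ℂ H₂] [AddCommGroup V] [Module ℂ V]
    (J₁ : H₁ →ₗ[ℂ] V) (J₂ : H₂ →ₗ[ℂ] V) : Prop :=
  ∀ f : H₁, ∃ g : H₂, J₂ g = J₁ f ∧ ‖g‖ = ‖f‖

/-- `K` is an `𝓛(Λ)`-valued reproducing kernel: hermitian and positive-definite. -/
def IsOpKernel [CompleteSpace Λ] (K : X → X → Λ →L[ℂ] Λ) : Prop :=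
  (∀ x y, K x y = ContinuousLinearMap.adjoint (K y x)) ∧
    ∀ (n : ℕ) (x : Fin n → X) (ξ : Fin n → Λ),
      0 ≤ ∑ j, ∑ k, ⟪ξ k, K (x j) (x k) (ξ j)⟫

/-- `k` is a scalar-valued reproducing kernel: hermitian and positive-definite. -/
def IsScalarKernel {Y : Type*} (k : Y → Y → ℂ) : Prop :=
  (∀ y z, k z y = starRingEnd ℂ (k y z)) ∧
    ∀ (n : ℕ) (y : Fin n → Y) (c : Fin n → ℂ),
      0 ≤ ∑ j, ∑ l, starRingEnd ℂ (c l) * c j * k (y j) (y l)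

/-- The relation `A ⪯ B` for positive operators. -/
def OpPrec (A B : Λ →L[ℂ] Λ) : Prop :=
  ∀ ξ : Λ, ∃ η : Λ, A ξ = B η ∧ ⟪ξ, A ξ⟫ = ⟪η, B η⟫

end Defs

/-!
The feature vectors `Φ x ξ` have the Gram matrix of the kernel functions `K(x,·)ξ`, and both
families span densely, so `Φ x ξ ↦ K(x,·)ξ` extends to a unitary `W ≃ H_K` identifying `H_K` with
`{Φ(·)*u}`, `‖Φ(·)*u‖ = ‖u‖`; likewise for `G`. Since `Φ'(·)*` is injective, `H_K ⪯ H_G` then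
amounts to a linear isometry `S : W → W'` with `Φ'(x)* S = Φ(x)*`, i.e. to `T = S*` with
`T Φ'(x) = Φ(x)` and `T*` isometric. Such a `T` satisfies `T T* = 1` and
`K(x,y) = Φ'(y)* T*T Φ'(x)`, so by density `K = G` iff `T*T = 1`, iff `T` is injective.
-/

section GramExtension

variable {𝕜 ι E F : Type*} [RCLike 𝕜] [NormedAddCommGroup E] [InnerProductSpace 𝕜 E]
  [NormedAddCommGroup F] [InnerProductSpace 𝕜 F]

theorem norm_linearCombination_eq_of_inner_eq {v : ι → E} {u : ι → F}
    (h : ∀ i j, inner 𝕜 (u i) (u j) = inner 𝕜 (v i) (v j)) (c : ι →₀ 𝕜) :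
    ‖Finsupp.linearCombination 𝕜 u c‖ = ‖Finsupp.linearCombination 𝕜 v c‖ := by
  have hinner : inner 𝕜 (Finsupp.linearCombination 𝕜 u c) (Finsupp.linearCombination 𝕜 u c) =
      inner 𝕜 (Finsupp.linearCombination 𝕜 v c) (Finsupp.linearCombination 𝕜 v c) := by
    simp only [Finsupp.linearCombination_apply, Finsupp.sum, sum_inner, inner_sum,
      inner_smul_left, inner_smul_right, h]
  rw [@norm_eq_sqrt_re_inner 𝕜, @norm_eq_sqrt_re_inner 𝕜, hinner]

variable [CompleteSpace E] [CompleteSpace F]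

theorem exists_linearIsometryEquiv_of_inner_eq {v : ι → E} {u : ι → F}
    (hv : Dense (Submodule.span 𝕜 (Set.range v) : Set E))
    (hu : Dense (Submodule.span 𝕜 (Set.range u) : Set F))
    (h : ∀ i j, inner 𝕜 (u i) (u j) = inner 𝕜 (v i) (v j)) :
    ∃ V : E ≃ₗᵢ[𝕜] F, ∀ i, V (v i) = u i := by
  set e := Finsupp.linearCombination 𝕜 v
  set f := Finsupp.linearCombination 𝕜 u
  have he : DenseRange e := by
    rwa [DenseRange, ← LinearMap.coe_range, Finsupp.range_linearCombination]
  have hnorm := norm_linearCombination_eq_of_inner_eq h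
  have hVe : ∀ c, f.extendOfNorm e (e c) = f c :=
    LinearMap.extendOfNorm_eq he ⟨1, fun c => by rw [hnorm, one_mul]⟩
  let V : E →ₗᵢ[𝕜] F := ⟨(f.extendOfNorm e).toLinearMap, fun w => by
    refine he.induction (fun _ ⟨c, hc⟩ => ?_) (isClosed_eq (by fun_prop) continuous_norm) w
    rw [← hc, ContinuousLinearMap.coe_coe, hVe, hnorm]⟩
  have hsurj : Function.Surjective V := by
    have hdense : Dense (Set.range V) := by
      refine hu.mono ?_
      rw [← Finsupp.range_linearCombination, LinearMap.coe_range]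
      rintro _ ⟨c, rfl⟩
      exact ⟨e c, hVe c⟩
    rw [← Set.range_eq_univ, ← V.isometry.isClosedEmbedding.isClosed_range.closure_eq,
      hdense.closure_eq]
  refine ⟨.ofSurjective V hsurj, fun i => ?_⟩
  show f.extendOfNorm e (v i) = u i
  simpa [e, f] using hVe (Finsupp.single i 1)

end GramExtension

theorem eq_of_inner_eq_of_dense_span {𝕜 E : Type*} [RCLike 𝕜] [NormedAddCommGroup E]
    [InnerProductSpace 𝕜 E] {s : Set E} (hs : Dense (Submodule.span 𝕜 s : Set E)) {a b : E}
    (h : ∀ w ∈ s, inner 𝕜 w a = inner 𝕜 w b) : a = b := by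
  have : innerSL 𝕜 a = innerSL 𝕜 b := ContinuousLinearMap.ext_on hs fun w hw => by
    simp only [innerSL_apply_apply]
    rw [← inner_conj_symm, h w hw, inner_conj_symm]
  exact ext_inner_right 𝕜 fun w => congr($this w)

section RKHSle

variable {H₁ H₂ E₁ E₂ V : Type*} [NormedAddCommGroup H₁] [InnerProductSpace ℂ H₁]
  [NormedAddCommGroup H₂] [InnerProductSpace ℂ H₂] [NormedAddCommGroup E₁] [InnerProductSpace ℂ E₁]
  [NormedAddCommGroup E₂] [InnerProductSpace ℂ E₂] [AddCommGroup V] [Module ℂ V]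

theorem rkhsLe_comp_linearIsometryEquiv_iff (J₁ : H₁ →ₗ[ℂ] V) (J₂ : H₂ →ₗ[ℂ] V)
    (V₁ : E₁ ≃ₗᵢ[ℂ] H₁) (V₂ : E₂ ≃ₗᵢ[ℂ] H₂) :
    RKHSle (J₁ ∘ₗ V₁.toLinearEquiv.toLinearMap) (J₂ ∘ₗ V₂.toLinearEquiv.toLinearMap) ↔
      RKHSle J₁ J₂ := by
  refine ⟨fun h f => ?_, fun h f => ?_⟩
  · obtain ⟨g, hg, hgn⟩ := h (V₁.symm f)
    refine ⟨V₂ g, ?_, ?_⟩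
    · simpa using hg
    · simpa using hgn
  · obtain ⟨g, hg, hgn⟩ := h (V₁ f)
    refine ⟨V₂.symm g, ?_, ?_⟩
    · simpa using hg
    · simpa using hgn

theorem rkhsLe_iff_exists_linearIsometry {J₁ : H₁ →ₗ[ℂ] V} {J₂ : H₂ →ₗ[ℂ] V}
    (hJ₂ : Function.Injective J₂) :
    RKHSle J₁ J₂ ↔ ∃ S : H₁ →ₗᵢ[ℂ] H₂, J₂ ∘ₗ S.toLinearMap = J₁ := by
  refine ⟨fun h => ?_, fun ⟨S, hS⟩ f => ⟨S f, congr($hS f), S.norm_map f⟩⟩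
  have hrange : ∀ f, J₁ f ∈ LinearMap.range J₂ := fun f =>
    let ⟨g, hg, _⟩ := h f; ⟨g, hg⟩
  let e := LinearEquiv.ofInjective J₂ hJ₂
  let S := e.symm.toLinearMap ∘ₗ J₁.codRestrict _ hrange
  have hS : ∀ f, J₂ (S f) = J₁ f := fun f =>
    congr(Subtype.val $(e.apply_symm_apply ⟨J₁ f, hrange f⟩))
  refine ⟨⟨S, fun f => ?_⟩, LinearMap.ext hS⟩
  obtain ⟨g, hg, hgn⟩ := h f
  rw [← hgn, hJ₂ ((hS f).trans hg.symm)]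

end RKHSle

section FeatureMap

variable {X Λ W W' : Type*} [NormedAddCommGroup Λ] [InnerProductSpace ℂ Λ] [CompleteSpace Λ]
  [NormedAddCommGroup W] [InnerProductSpace ℂ W] [CompleteSpace W]
  [NormedAddCommGroup W'] [InnerProductSpace ℂ W'] [CompleteSpace W']

def piAdjoint (Φ : X → Λ →L[ℂ] W) : W →ₗ[ℂ] (X → Λ) :=
  LinearMap.pi fun x => (adjoint (Φ x)).toLinearMap

@[simp]
theorem piAdjoint_apply (Φ : X → Λ →L[ℂ] W) (u : W) (x : X) :
    piAdjoint Φ u x = adjoint (Φ x) u :=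
  rfl

theorem piAdjoint_injective {Φ : X → Λ →L[ℂ] W}
    (hdense : Dense (Submodule.span ℂ (Set.range fun p : X × Λ => Φ p.1 p.2) : Set W)) :
    Function.Injective (piAdjoint Φ) := by
  refine (injective_iff_map_eq_zero _).2 fun u hu => eq_of_inner_eq_of_dense_span hdense ?_
  rintro _ ⟨⟨x, ξ⟩, rfl⟩
  rw [inner_zero_right, ← adjoint_inner_right, ← piAdjoint_apply, hu, Pi.zero_apply,
    inner_zero_right]

theorem piAdjoint_comp_eq_iff (Φ : X → Λ →L[ℂ] W) (Φ' : X → Λ →L[ℂ] W') (S : W →L[ℂ] W') :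
    piAdjoint Φ' ∘ₗ S.toLinearMap = piAdjoint Φ ↔ ∀ x, adjoint S ∘L Φ' x = Φ x := by
  have hadj : ∀ x, adjoint S ∘L Φ' x = Φ x ↔ adjoint (Φ' x) ∘L S = adjoint (Φ x) := fun x => by
    rw [← adjoint.injective.eq_iff, adjoint_comp, adjoint_adjoint]
  simp only [hadj, LinearMap.ext_iff, funext_iff, ContinuousLinearMap.ext_iff]
  exact forall_comm

theorem exists_linearIsometry_piAdjoint_comp_eq_iff (Φ : X → Λ →L[ℂ] W) (Φ' : X → Λ →L[ℂ] W') :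
    (∃ S : W →ₗᵢ[ℂ] W', piAdjoint Φ' ∘ₗ S.toLinearMap = piAdjoint Φ) ↔
      ∃ T : W' →L[ℂ] W, (∀ x, T ∘L Φ' x = Φ x) ∧ ∀ u, ‖adjoint T u‖ = ‖u‖ := by
  constructor
  · rintro ⟨S, hS⟩
    refine ⟨adjoint S.toContinuousLinearMap, (piAdjoint_comp_eq_iff Φ Φ' _).1 hS, fun u => ?_⟩
    rw [adjoint_adjoint]
    exact S.norm_map u
  · rintro ⟨T, hT, hTiso⟩
    refine ⟨⟨(adjoint T).toLinearMap, hTiso⟩, (piAdjoint_comp_eq_iff Φ Φ' (adjoint T)).2 ?_⟩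
    simpa only [adjoint_adjoint] using hT

theorem adjoint_comp_self_eq_one_iff_injective {T : W' →L[ℂ] W}
    (hT : ∀ u, ‖adjoint T u‖ = ‖u‖) : adjoint T ∘L T = 1 ↔ Function.Injective T := by
  have hTT : T ∘L adjoint T = 1 := by
    simpa only [adjoint_adjoint] using (norm_map_iff_adjoint_comp_self (adjoint T)).1 hT
  have hleft : Function.LeftInverse T (adjoint T) := fun u => congr($hTT u)
  exact ⟨fun h => Function.LeftInverse.injective (g := adjoint T) fun u => congr($h u),
    fun h => ContinuousLinearMap.ext (hleft.rightInverse_of_injective h)⟩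

theorem featureKernel_eq_iff_adjoint_comp_self_eq_one {Φ : X → Λ →L[ℂ] W}
    {Φ' : X → Λ →L[ℂ] W'}
    (hdense' : Dense (Submodule.span ℂ (Set.range fun p : X × Λ => Φ' p.1 p.2) : Set W'))
    {T : W' →L[ℂ] W} (hT : ∀ x, T ∘L Φ' x = Φ x) :
    (∀ x y, adjoint (Φ' y) ∘L Φ' x = adjoint (Φ y) ∘L Φ x) ↔ adjoint T ∘L T = 1 := by
  have hK : ∀ x y, adjoint (Φ y) ∘L Φ x = adjoint (Φ' y) ∘L (adjoint T ∘L T) ∘L Φ' x :=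
    fun x y => by rw [← hT, ← hT, adjoint_comp]; rfl
  simp only [hK]
  refine ⟨fun h => ContinuousLinearMap.ext_on hdense' ?_, fun h x y => by rw [h]; rfl⟩
  rintro _ ⟨⟨x, ξ⟩, rfl⟩
  refine eq_of_inner_eq_of_dense_span hdense' ?_
  rintro _ ⟨⟨y, η⟩, rfl⟩
  simp only [← adjoint_inner_right (Φ' y), ← ContinuousLinearMap.comp_apply]
  rw [← h x y]
  rfl

end FeatureMap

namespace IsVRKHS

variable {X Λ H : Type*} [NormedAddCommGroup Λ] [InnerProductSpace ℂ Λ]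
  [NormedAddCommGroup H] [InnerProductSpace ℂ H] {K : X → X → Λ →L[ℂ] Λ}
  {J : H →ₗ[ℂ] (X → Λ)} {kf : X → Λ → H}

theorem inner_kf (hH : IsVRKHS K H J kf) (x y : X) (ξ η : Λ) :
    ⟪kf x ξ, kf y η⟫ = ⟪ξ, K y x η⟫ := by
  rw [hH.repro, hH.kfun_eq]

theorem dense_span_kf [CompleteSpace H] (hH : IsVRKHS K H J kf) :
    Dense (Submodule.span ℂ (Set.range fun p : X × Λ => kf p.1 p.2) : Set H) := by
  rw [Submodule.dense_iff_topologicalClosure_eq_top, Submodule.topologicalClosure_eq_top_iff,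
    Submodule.eq_bot_iff]
  intro f hf
  have hJf : J f = 0 := funext fun x => by
    rw [Pi.zero_apply, ← inner_self_eq_zero (𝕜 := ℂ), ← hH.repro]
    exact Submodule.inner_right_of_mem_orthogonal
      (Submodule.subset_span (Set.mem_range_self (x, J f x))) hf
  exact hH.inj (hJf.trans (map_zero J).symm)

theorem exists_linearIsometryEquiv_piAdjoint [CompleteSpace Λ] [CompleteSpace H]
    {W : Type*} [NormedAddCommGroup W] [InnerProductSpace ℂ W] [CompleteSpace W]
    (hH : IsVRKHS K H J kf) {Φ : X → Λ →L[ℂ] W} (hKdef : ∀ x y, K x y = adjoint (Φ y) ∘L Φ x)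
    (hdense : Dense (Submodule.span ℂ (Set.range fun p : X × Λ => Φ p.1 p.2) : Set W)) :
    ∃ V : W ≃ₗᵢ[ℂ] H, J ∘ₗ V.toLinearEquiv.toLinearMap = piAdjoint Φ := by
  obtain ⟨V, hV⟩ := exists_linearIsometryEquiv_of_inner_eq hdense hH.dense_span_kf
    fun p q => by rw [hH.inner_kf, hKdef, comp_apply, adjoint_inner_right]
  refine ⟨V, LinearMap.ext fun u => funext fun x => ext_inner_left ℂ fun ξ => ?_⟩
  rw [LinearMap.comp_apply, piAdjoint_apply, ← hH.repro, adjoint_inner_right, ← V.inner_map_map]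
  exact congr(⟪$(hV (x, ξ)), V u⟫).symm

end IsVRKHS

/-- With feature maps Φ, Φ' whose feature vectors have dense span, H_K ⪯ H_G iff
there is a bounded operator T : W' → W with TΦ'(x) = Φ(x) for all x and T* isometric; and in
that case, G ≠ K iff T is not injective. -/
theorem stmt7 {X Λ W W' : Type*} [NormedAddCommGroup Λ] [InnerProductSpace ℂ Λ] [CompleteSpace Λ]
    [NormedAddCommGroup W] [InnerProductSpace ℂ W] [CompleteSpace W]
    [NormedAddCommGroup W'] [InnerProductSpace ℂ W'] [CompleteSpace W']
    (Φ : X → Λ →L[ℂ] W) (Φ' : X → Λ →L[ℂ] W')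
    (K G : X → X → Λ →L[ℂ] Λ)
    (hKdef : ∀ x y, K x y = ContinuousLinearMap.adjoint (Φ y) ∘L Φ x)
    (hGdef : ∀ x y, G x y = ContinuousLinearMap.adjoint (Φ' y) ∘L Φ' x)
    (hdense : Dense ((Submodule.span ℂ (Set.range fun p : X × Λ => Φ p.1 p.2) : Submodule ℂ W) : Set W))
    (hdense' : Dense ((Submodule.span ℂ (Set.range fun p : X × Λ => Φ' p.1 p.2) : Submodule ℂ W') : Set W'))
    {HK : Type*} [NormedAddCommGroup HK] [InnerProductSpace ℂ HK] [CompleteSpace HK]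
    (JK : HK →ₗ[ℂ] (X → Λ)) (kfK : X → Λ → HK) (hHK : IsVRKHS K HK JK kfK)
    {HG : Type*} [NormedAddCommGroup HG] [InnerProductSpace ℂ HG] [CompleteSpace HG]
    (JG : HG →ₗ[ℂ] (X → Λ)) (kfG : X → Λ → HG) (hHG : IsVRKHS G HG JG kfG) :
    (RKHSle JK JG ↔
        ∃ T : W' →L[ℂ] W, (∀ x, T ∘L Φ' x = Φ x) ∧
          ∀ u : W, ‖ContinuousLinearMap.adjoint T u‖ = ‖u‖) ∧
      (RKHSle JK JG →
        ∀ T : W' →L[ℂ] W, (∀ x, T ∘L Φ' x = Φ x) →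
          (∀ u : W, ‖ContinuousLinearMap.adjoint T u‖ = ‖u‖) →
          (G ≠ K ↔ ¬ Function.Injective T)) := by
  obtain ⟨VK, hVK⟩ := hHK.exists_linearIsometryEquiv_piAdjoint hKdef hdense
  obtain ⟨VG, hVG⟩ := hHG.exists_linearIsometryEquiv_piAdjoint hGdef hdense'
  refine ⟨?_, fun _ T hT hTiso => not_congr ?_⟩
  · rw [← rkhsLe_comp_linearIsometryEquiv_iff JK JG VK VG, hVK, hVG,
      rkhsLe_iff_exists_linearIsometry (piAdjoint_injective hdense'),
      exists_linearIsometry_piAdjoint_comp_eq_iff]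
  · rw [← adjoint_comp_self_eq_one_iff_injective hTiso,
      ← featureKernel_eq_iff_adjoint_comp_self_eq_one hdense' hT]
    simp only [funext_iff, hKdef, hGdef]
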